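/- arXiv:1412.4749 — 2 statements merged into one kernel-verified Lean document; each statement's English description precedes it below -/
import Mathlib

section
/- Let f : ∂Ω₀ → ℝ be Borel measurable, locally bounded, and bounded from below. Then for every point x ∈ ∂Ω₀ the Bellman function attains the boundary value B_{Ω,f}(x) = f(x); that is, the constant function φ ≡ x belongs to A_Ω (giving B_{Ω,f}(x) ≥ f(x)), and strict convexity of the closure of Ω₀ forces any φ ∈ A_Ω with ⟨φ⟩_I = x ∈ ∂Ω₀ to satisfy ⟨f∘φ⟩_I = f(x). -/
open MeasureTheory Set Classical

/-- Average of a vector-valued function over the interval `[a, b]`. -/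
noncomputable def avgV (φ : ℝ → ℝ × ℝ) (a b : ℝ) : ℝ × ℝ :=
  (b - a)⁻¹ • ∫ t in a..b, φ t

/-- The class `A_Ω` of integrable functions on `I = [0,1]` with values (a.e.) in `∂Ω₀`
whose averages over all subintervals of positive length avoid `Ω₁`. -/
def memA (Ω₀ Ω₁ : Set (ℝ × ℝ)) (φ : ℝ → ℝ × ℝ) : Prop :=
  IntegrableOn φ (Icc 0 1) volume ∧
  (∀ᵐ t ∂(volume.restrict (Icc (0:ℝ) 1)), φ t ∈ frontier Ω₀) ∧
  ∀ a b : ℝ, 0 ≤ a → a < b → b ≤ 1 → avgV φ a b ∉ Ω₁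

/-- The average `⟨f ∘ φ⟩_I` over `I = [0,1]` (which has length `1`), as an extended real:
since `f` is bounded from below, non-integrability of `f ∘ φ` means the average is `+∞`. -/

noncomputable def avgF (f : ℝ × ℝ → ℝ) (φ : ℝ → ℝ × ℝ) : EReal :=
  if IntegrableOn (fun t => f (φ t)) (Icc 0 1) volume
  then (((∫ t in Icc (0:ℝ) 1, f (φ t)) : ℝ) : EReal)
  else ⊤

/-- The Bellman function `B_{Ω,f}(x) = sup {⟨f∘φ⟩_I : φ ∈ A_Ω, ⟨φ⟩_I = x}`. -/
noncomputable def bellman (Ω₀ Ω₁ : Set (ℝ × ℝ)) (f : ℝ × ℝ → ℝ) (x : ℝ × ℝ) : EReal :=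
  sSup {y : EReal | ∃ φ, memA Ω₀ Ω₁ φ ∧ avgV φ 0 1 = x ∧ y = avgF f φ}

/-- `G : S → ℝ ∪ {+∞}` is locally concave on `S`: concave on every segment contained in `S`. -/
def LocConcaveOn (S : Set (ℝ × ℝ)) (G : ℝ × ℝ → EReal) : Prop :=
  ∀ x ∈ S, ∀ y ∈ S, segment ℝ x y ⊆ S → ∀ t : ℝ, t ∈ Icc (0:ℝ) 1 →
    ((t : ℝ) : EReal) * G x + ((1 - t : ℝ) : EReal) * G y ≤ G (t • x + (1 - t) • y)

/-- The minimal locally concave majorant `𝔅_{Ω,f}(x) = inf {G(x) : G ∈ Λ_{Ω,f}}`,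
where `Λ_{Ω,f}` consists of the locally concave functions on `Ω = cl(Ω₀ \ Ω₁)`
that majorize `f` on `∂Ω₀`. -/
noncomputable def bellInf (Ω₀ Ω₁ : Set (ℝ × ℝ)) (f : ℝ × ℝ → ℝ) (x : ℝ × ℝ) : EReal :=
  sInf {y : EReal | ∃ G : ℝ × ℝ → EReal,
    LocConcaveOn (closure (Ω₀ \ Ω₁)) G ∧
    (∀ z ∈ frontier Ω₀, (f z : EReal) ≤ G z) ∧ y = G x}


/-!
A function in `A_Ω` takes values in `cl Ω₀`, so by strict convexity of `cl Ω₀` it is either a.e.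
constant or its average lies in `int (cl Ω₀) = Ω₀`. An average on `∂Ω₀` rules out the second case,
so `φ = x` a.e. and `⟨f ∘ φ⟩_I = f(x)`; the constant function `x` is admissible because
`x ∉ Ω₀ ⊇ Ω₁`, hence the supremum defining `B_{Ω,f}(x)` is over the single value `f(x)`.
-/

theorem StrictConvex.ae_eq_const_of_average_mem_frontier {α E : Type*} {m0 : MeasurableSpace α}
    [NormedAddCommGroup E] [NormedSpace ℝ E] [CompleteSpace E] {μ : Measure α} [IsFiniteMeasure μ]
    {s : Set E} {f : α → E} (hs : StrictConvex ℝ (closure s)) (hso : IsOpen s)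
    (hsc : Convex ℝ s) (hfs : ∀ᵐ a ∂μ, f a ∈ closure s) (hfi : Integrable f μ)
    (havg : ⨍ a, f a ∂μ ∈ frontier s) :
    f =ᵐ[μ] Function.const α (⨍ a, f a ∂μ) := by
  refine (hs.ae_eq_const_or_average_mem_interior isClosed_closure hfs hfi).resolve_right ?_
  have hne : (interior s).Nonempty := by
    rw [hso.interior_eq, ← closure_nonempty_iff]
    exact ⟨_, frontier_subset_closure havg⟩
  rw [hsc.interior_closure_eq_interior_of_nonempty_interior hne, hso.interior_eq]
  exact (hso.frontier_eq ▸ havg).2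

lemma avgV_const (x : ℝ × ℝ) {a b : ℝ} (hab : a ≠ b) : avgV (fun _ => x) a b = x := by
  rw [avgV, intervalIntegral.integral_const, smul_smul,
    inv_mul_cancel₀ (sub_ne_zero.mpr hab.symm), one_smul]

lemma avgV_zero_one (φ : ℝ → ℝ × ℝ) :
    avgV φ 0 1 = ⨍ t, φ t ∂(volume.restrict (Icc (0 : ℝ) 1)) := by
  rw [avgV, average_eq, intervalIntegral.integral_of_le zero_le_one,
    integral_Icc_eq_integral_Ioc]
  simp

lemma memA_const {Ω₀ Ω₁ : Set (ℝ × ℝ)} {x : ℝ × ℝ} (hx₀ : x ∈ frontier Ω₀) (hx₁ : x ∉ Ω₁) :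
    memA Ω₀ Ω₁ (fun _ => x) := by
  refine ⟨integrableOn_const (by simp), .of_forall fun _ => hx₀, ?_⟩
  intro a b _ hab _
  rw [avgV_const x hab.ne]
  exact hx₁

lemma avgF_of_ae_eq_const (f : ℝ × ℝ → ℝ) {φ : ℝ → ℝ × ℝ} {x : ℝ × ℝ}
    (hφ : φ =ᵐ[volume.restrict (Icc (0 : ℝ) 1)] Function.const ℝ x) :
    avgF f φ = f x := by
  have hfφ : (fun t => f (φ t)) =ᵐ[volume.restrict (Icc (0 : ℝ) 1)] fun _ => f x := by
    filter_upwards [hφ] with t ht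
    rw [ht, Function.const_apply]
  have hint : IntegrableOn (fun t => f (φ t)) (Icc 0 1) volume :=
    (integrable_const (f x)).congr hfφ.symm
  rw [avgF, if_pos hint, integral_congr_ae hfφ]
  simp

lemma bellman_eq_of_forall_avgF_eq {Ω₀ Ω₁ : Set (ℝ × ℝ)} {f : ℝ × ℝ → ℝ} {x : ℝ × ℝ}
    {c : EReal} (hA : ∃ φ, memA Ω₀ Ω₁ φ ∧ avgV φ 0 1 = x)
    (hc : ∀ φ, memA Ω₀ Ω₁ φ → avgV φ 0 1 = x → avgF f φ = c) :
    bellman Ω₀ Ω₁ f x = c := by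
  obtain ⟨φ, hφ, hφx⟩ := hA
  have hset : {y : EReal | ∃ φ, memA Ω₀ Ω₁ φ ∧ avgV φ 0 1 = x ∧ y = avgF f φ} = {c} := by
    ext y
    constructor
    · rintro ⟨ψ, hψ, hψx, rfl⟩
      exact hc ψ hψ hψx
    · rintro rfl
      exact ⟨φ, hφ, hφx, (hc φ hφ hφx).symm⟩
  rw [bellman, hset, sSup_singleton]

theorem bellman_boundary_value_general
    (Ω₀ Ω₁ : Set (ℝ × ℝ))
    (hΩ₀open : IsOpen Ω₀) (hΩ₀conv : Convex ℝ Ω₀)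
    (hΩ₀strict : StrictConvex ℝ (closure Ω₀))
    (hΩ₁sub : Ω₁ ⊆ Ω₀)
    (f : ℝ × ℝ → ℝ)
    (x : ℝ × ℝ) (hx : x ∈ frontier Ω₀) :
    memA Ω₀ Ω₁ (fun _ => x) ∧
    (∀ φ : ℝ → ℝ × ℝ, memA Ω₀ Ω₁ φ → avgV φ 0 1 = x → avgF f φ = ((f x : ℝ) : EReal)) ∧
    bellman Ω₀ Ω₁ f x = ((f x : ℝ) : EReal) := by
  have hA : memA Ω₀ Ω₁ (fun _ => x) :=
    memA_const hx fun hx₁ => (hΩ₀open.frontier_eq ▸ hx).2 (hΩ₁sub hx₁)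
  have hboundary : ∀ φ, memA Ω₀ Ω₁ φ → avgV φ 0 1 = x → avgF f φ = f x := by
    rintro φ ⟨hφi, hφx₀, -⟩ hφx
    rw [avgV_zero_one] at hφx
    apply avgF_of_ae_eq_const
    rw [← hφx]
    refine hΩ₀strict.ae_eq_const_of_average_mem_frontier hΩ₀open hΩ₀conv ?_ hφi (hφx ▸ hx)
    filter_upwards [hφx₀] with t ht using frontier_subset_closure ht
  exact ⟨hA, hboundary,
    bellman_eq_of_forall_avgF_eq ⟨_, hA, avgV_const x zero_ne_one⟩ hboundary⟩

/-- For every boundary point `x ∈ ∂Ω₀` the Bellman function attains the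
boundary value `f(x)`: the constant function `φ ≡ x` belongs to `A_Ω`, strict convexity of
`cl Ω₀` forces any `φ ∈ A_Ω` with `⟨φ⟩_I = x` to satisfy `⟨f∘φ⟩_I = f(x)`, and hence
`B_{Ω,f}(x) = f(x)`. -/
theorem bellman_boundary_value
    (Ω₀ Ω₁ : Set (ℝ × ℝ))
    (hΩ₀ne : Ω₀.Nonempty) (hΩ₀open : IsOpen Ω₀) (hΩ₀conv : Convex ℝ Ω₀)
    (hΩ₀strict : StrictConvex ℝ (closure Ω₀))
    (hΩ₁open : IsOpen Ω₁) (hΩ₁conv : Convex ℝ Ω₁) (hΩ₁sub : Ω₁ ⊆ Ω₀)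
    (hΩ₁strict : StrictConvex ℝ (closure Ω₁))
    (f : ℝ × ℝ → ℝ) (hfmeas : Measurable f)
    (hflocb : ∀ x ∈ frontier Ω₀, ∃ U ∈ nhds x, ∃ C : ℝ, ∀ z ∈ U ∩ frontier Ω₀, f z ≤ C)
    (hfbelow : ∃ c : ℝ, ∀ z ∈ frontier Ω₀, c ≤ f z)
    (x : ℝ × ℝ) (hx : x ∈ frontier Ω₀) :
    memA Ω₀ Ω₁ (fun _ => x) ∧
    (∀ φ : ℝ → ℝ × ℝ, memA Ω₀ Ω₁ φ → avgV φ 0 1 = x → avgF f φ = ((f x : ℝ) : EReal)) ∧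
    bellman Ω₀ Ω₁ f x = ((f x : ℝ) : EReal) :=
  bellman_boundary_value_general Ω₀ Ω₁ hΩ₀open hΩ₀conv hΩ₀strict hΩ₁sub f x hx
end

section
/- Let K ⊆ ℝ² be a closed convex set that is strictly convex (the open segment between any two distinct points of K lies in the interior of K). Let φ : [0,1] → ℝ² be integrable with φ(t) ∈ ∂K (the frontier of K) for almost every t ∈ [0,1]. If the average x = ∫₀¹ φ(t) dt lies on the frontier ∂K, then φ(t) = x for almost every t ∈ [0,1]. -/
open MeasureTheory Set

/-!
Since `K` is strictly convex, a separating functional `l` between a boundary point `x` and the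
open convex set `interior K` attains its maximum over `K` only at `x`: for `y ∈ K \ {x}` the
midpoint of `x` and `y` lies in `interior K`. So `x` is an exposed point of `K`. If `x` is the
average of `φ`, then `l ∘ φ ≤ l x` a.e. with equal averages, hence `l ∘ φ = l x` a.e., and
exposedness forces `φ = x` a.e.
-/

theorem StrictConvex.mem_exposedPoints_of_notMem_interior {E : Type*} [TopologicalSpace E]
    [AddCommGroup E] [Module ℝ E] [IsTopologicalAddGroup E] [ContinuousSMul ℝ E] {K : Set E}
    {x : E} (hK : StrictConvex ℝ K) (hxK : x ∈ K) (hx : x ∉ interior K) :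
    x ∈ K.exposedPoints ℝ := by
  obtain ⟨l, hl⟩ := geometric_hahn_banach_open_point hK.convex.interior isOpen_interior hx
  have hlt : ∀ y ∈ K, y ≠ x → l y < l x := by
    intro y hy hne
    have hmid := hl _ (hK hy hxK hne one_half_pos one_half_pos (add_halves 1))
    rw [map_add, map_smul, map_smul, smul_eq_mul, smul_eq_mul] at hmid
    linarith
  refine ⟨hxK, l, fun y hy => ⟨?_, fun hge => ?_⟩⟩
  · rcases eq_or_ne y x with rfl | hne
    exacts [le_rfl, (hlt y hy hne).le]
  · by_contra hne
    exact (hlt y hy hne).not_ge hge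

theorem ae_eq_integral_of_integral_mem_exposedPoints {α E : Type*} [MeasurableSpace α]
    {μ : Measure α} [IsProbabilityMeasure μ] [NormedAddCommGroup E] [NormedSpace ℝ E]
    [CompleteSpace E] {A : Set E} {φ : α → E} (hφ : Integrable φ μ) (hφA : ∀ᵐ a ∂μ, φ a ∈ A)
    (hx : ∫ a, φ a ∂μ ∈ A.exposedPoints ℝ) : ∀ᵐ a ∂μ, φ a = ∫ a, φ a ∂μ := by
  obtain ⟨-, l, hl⟩ := hx
  have hle : (fun a => l (φ a)) ≤ᵐ[μ] fun _ => l (∫ a, φ a ∂μ) :=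
    hφA.mono fun a ha => (hl _ ha).1
  have heq : (fun a => l (φ a)) =ᵐ[μ] fun _ => l (∫ a, φ a ∂μ) := by
    refine (integral_eq_iff_of_ae_le (l.integrable_comp hφ) (integrable_const _) hle).1 ?_
    simp [l.integral_comp_comm hφ]
  filter_upwards [hφA, heq] with a ha hla using (hl _ ha).2 hla.ge

theorem ae_const_of_avg_mem_frontier_general
    (K : Set (ℝ × ℝ)) (hKclosed : IsClosed K)
    (hKstrict : StrictConvex ℝ K)
    (φ : ℝ → ℝ × ℝ) (hφint : IntegrableOn φ (Icc 0 1) volume)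
    (hφbd : ∀ᵐ t ∂(volume.restrict (Icc (0:ℝ) 1)), φ t ∈ frontier K)
    (x : ℝ × ℝ) (hxavg : x = ∫ t in Icc (0:ℝ) 1, φ t) (hxK : x ∈ frontier K) :
    ∀ᵐ t ∂(volume.restrict (Icc (0:ℝ) 1)), φ t = x := by
  have : IsProbabilityMeasure (volume.restrict (Icc (0:ℝ) 1)) := ⟨by simp⟩
  have hφK : ∀ᵐ t ∂(volume.restrict (Icc (0:ℝ) 1)), φ t ∈ K :=
    hφbd.mono fun _ ht => hKclosed.frontier_subset ht
  have hx : x ∈ K.exposedPoints ℝ :=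
    hKstrict.mem_exposedPoints_of_notMem_interior (hKclosed.frontier_subset hxK) hxK.2
  subst hxavg
  exact ae_eq_integral_of_integral_mem_exposedPoints hφint hφK hx

/-- If `K ⊆ ℝ²` is closed, convex and strictly convex, `φ : [0,1] → ℝ²`
is integrable with values a.e. in `∂K`, and the average `x = ∫₀¹ φ` lies on `∂K`,
then `φ = x` almost everywhere on `[0,1]`. -/
theorem ae_const_of_avg_mem_frontier
    (K : Set (ℝ × ℝ)) (hKclosed : IsClosed K) (hKconv : Convex ℝ K)
    (hKstrict : StrictConvex ℝ K)
    (φ : ℝ → ℝ × ℝ) (hφint : IntegrableOn φ (Icc 0 1) volume)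
    (hφbd : ∀ᵐ t ∂(volume.restrict (Icc (0:ℝ) 1)), φ t ∈ frontier K)
    (x : ℝ × ℝ) (hxavg : x = ∫ t in Icc (0:ℝ) 1, φ t) (hxK : x ∈ frontier K) :
    ∀ᵐ t ∂(volume.restrict (Icc (0:ℝ) 1)), φ t = x :=
  ae_const_of_avg_mem_frontier_general K hKclosed hKstrict φ hφint hφbd x hxavg hxK
end
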